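/- Let n ≥ 1 and let G be an n×n positive semidefinite complex matrix whose diagonal entries are all strictly positive. Then ∑_{i=1}^{n} ((√G)_{ii})² ≥ ∑_{i=1}^{n} G_{ii}³ / (∑_{j=1}^{n} |G_{ij}|²). -/

import Mathlib

/-!
Write `G = U diag(λ) U*` and put `w_t = |U_it|²`, `v_t = √λ_t`. Then `G_ii = ∑ w v²`,
`(√G)_ii = ∑ w v` and `∑_j |G_ij|² = (G²)_ii = ∑ w v⁴`, so each summand of the claim is the moment
inequality `m₂³ ≤ m₁² m₄` for the measure `w`, which follows from two Cauchy–Schwarz steps.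
-/

open Matrix
open scoped ComplexOrder

/-- The positive semidefinite square root of a positive semidefinite matrix
(the definition `Matrix.PosSemidef.sqrt` of the older Mathlib, since removed). -/
noncomputable def Matrix.PosSemidef.sqrt {n : Type*} [Fintype n] [DecidableEq n]
    {A : Matrix n n ℂ} (hA : A.PosSemidef) : Matrix n n ℂ :=
  hA.1.eigenvectorUnitary.1 * diagonal ((↑) ∘ (√·) ∘ hA.1.eigenvalues) *
    (star hA.1.eigenvectorUnitary : Matrix n n ℂ)

theorem Finset.sum_mul_sq_pow_three_le {ι : Type*} (s : Finset ι) {w v : ι → ℝ}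
    (hw : ∀ t ∈ s, 0 ≤ w t) (hv : ∀ t ∈ s, 0 ≤ v t) :
    (∑ t ∈ s, w t * v t ^ 2) ^ 3 ≤ (∑ t ∈ s, w t * v t) ^ 2 * ∑ t ∈ s, w t * v t ^ 4 := by
  have hterm (k : ℕ) : ∀ t ∈ s, 0 ≤ w t * v t ^ k := fun t ht =>
    mul_nonneg (hw t ht) (pow_nonneg (hv t ht) k)
  have cauchy_schwarz (k : ℕ) : (∑ t ∈ s, w t * v t ^ (k + 1)) ^ 2 ≤
      (∑ t ∈ s, w t * v t ^ k) * ∑ t ∈ s, w t * v t ^ (k + 2) :=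
    sum_sq_le_sum_mul_sum_of_sq_le_mul s (hterm k) (hterm (k + 2)) fun t _ => le_of_eq (by ring)
  have h₁ : 0 ≤ ∑ t ∈ s, w t * v t := sum_nonneg fun t ht => by simpa using hterm 1 t ht
  have h₃ : 0 ≤ ∑ t ∈ s, w t * v t ^ 3 := sum_nonneg (hterm 3)
  have h₄ : 0 ≤ ∑ t ∈ s, w t * v t ^ 4 := sum_nonneg (hterm 4)
  have cs₁ := cauchy_schwarz 1
  have cs₂ := cauchy_schwarz 2
  simp only [pow_one, Nat.reduceAdd] at cs₁ cs₂
  -- `m₂⁴ ≤ m₁² m₃² ≤ m₁² m₂ m₄` for the moments `mₖ = ∑ w vᵏ`; then cancel one `m₂`.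
  have key : (∑ t ∈ s, w t * v t ^ 2) * (∑ t ∈ s, w t * v t ^ 2) ^ 3 ≤
      (∑ t ∈ s, w t * v t ^ 2) * ((∑ t ∈ s, w t * v t) ^ 2 * ∑ t ∈ s, w t * v t ^ 4) := by
    nlinarith [mul_le_mul cs₁ cs₁ (sq_nonneg _) (mul_nonneg h₁ h₃),
      mul_le_mul_of_nonneg_left cs₂ (sq_nonneg (∑ t ∈ s, w t * v t))]
  rcases (sum_nonneg (hterm 2)).eq_or_lt with h₂ | h₂
  · rw [← h₂, zero_pow three_ne_zero]
    exact mul_nonneg (sq_nonneg _) h₄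
  · exact le_of_mul_le_mul_left key h₂

theorem Matrix.sum_norm_sq_apply_eq_re_mul_conjTranspose {𝕜 m n : Type*} [RCLike 𝕜] [Fintype n]
    (A : Matrix m n 𝕜) (i : m) : ∑ j, ‖A i j‖ ^ 2 = RCLike.re ((A * Aᴴ) i i) := by
  rw [mul_apply, map_sum]
  refine Finset.sum_congr rfl fun j _ => ?_
  rw [conjTranspose_apply, RCLike.star_def, RCLike.mul_conj, ← RCLike.ofReal_pow, RCLike.ofReal_re]

theorem Matrix.IsHermitian.re_cfc_apply_self {𝕜 n : Type*} [RCLike 𝕜] [Fintype n]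
    [DecidableEq n] {A : Matrix n n 𝕜} (hA : A.IsHermitian) (f : ℝ → ℝ) (i : n) :
    RCLike.re (cfc f A i i) =
      ∑ t, ‖(hA.eigenvectorUnitary : Matrix n n 𝕜) i t‖ ^ 2 * f (hA.eigenvalues t) := by
  rw [hA.cfc_eq, IsHermitian.cfc, Unitary.conjStarAlgAut_apply, mul_apply, map_sum]
  refine Finset.sum_congr rfl fun t _ => ?_
  rw [mul_diagonal, star_apply, RCLike.star_def, mul_right_comm, RCLike.mul_conj]
  simp [mul_comm]

theorem Matrix.PosSemidef.sqrt_eq_cfc {n : Type*} [Fintype n] [DecidableEq n]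
    {A : Matrix n n ℂ} (hA : A.PosSemidef) : hA.sqrt = cfc Real.sqrt A := by
  rw [hA.1.cfc_eq]; rfl

theorem stmt_2_general (n : ℕ) (G : Matrix (Fin n) (Fin n) ℂ) (hG : G.PosSemidef) :
    ∑ i, ((G i i).re) ^ 3 / (∑ j, ‖G i j‖ ^ 2) ≤ ∑ i, ((hG.sqrt i i).re) ^ 2 := by
  refine Finset.sum_le_sum fun i _ => ?_
  set w : Fin n → ℝ := fun t => ‖(hG.1.eigenvectorUnitary : Matrix (Fin n) (Fin n) ℂ) i t‖ ^ 2
  set v : Fin n → ℝ := fun t => √(hG.1.eigenvalues t)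
  have hv_sq (t : Fin n) : hG.1.eigenvalues t = v t ^ 2 :=
    (Real.sq_sqrt (hG.eigenvalues_nonneg t)).symm
  have hdiag : (G i i).re = ∑ t, w t * v t ^ 2 := by
    rw [← RCLike.re_to_complex, ← cfc_id' ℝ G hG.1.isSelfAdjoint, hG.1.re_cfc_apply_self]
    simp only [w, hv_sq]
  have hrow : ∑ j, ‖G i j‖ ^ 2 = ∑ t, w t * v t ^ 4 := by
    rw [sum_norm_sq_apply_eq_re_mul_conjTranspose, hG.1.eq, ← sq,
      ← cfc_pow_id (R := ℝ) G 2 hG.1.isSelfAdjoint, hG.1.re_cfc_apply_self]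
    simp only [w, hv_sq, ← pow_mul]
  have hsqrt : (hG.sqrt i i).re = ∑ t, w t * v t := by
    rw [← RCLike.re_to_complex, hG.sqrt_eq_cfc, hG.1.re_cfc_apply_self]
  rw [hdiag, hrow, hsqrt]
  exact div_le_of_le_mul₀ (Finset.sum_nonneg fun t _ => by positivity) (sq_nonneg _)
    (Finset.univ.sum_mul_sq_pow_three_le (fun t _ => by positivity) fun t _ => by positivity)

theorem stmt_2 (n : ℕ) (hn : 1 ≤ n) (G : Matrix (Fin n) (Fin n) ℂ) (hG : G.PosSemidef)
    (hdiag : ∀ i, 0 < (G i i).re) :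
    ∑ i, ((G i i).re) ^ 3 / (∑ j, ‖G i j‖ ^ 2) ≤ ∑ i, ((hG.sqrt i i).re) ^ 2 :=
  stmt_2_general n G hG
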